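/- The game has exactly one pure-strategy Nash equilibrium: there is a unique profile d* ∈ ∏_{i<N} [m, M] such that for every organization i and every y ∈ [m, M], U_i(d* with i-th coordinate y) ≤ U_i(d*). -/

import Mathlib

open Real Finset

/-- Global model error: `ε(d) = exp(((1/N)·Σ_j (α·(L_j + d_j)^(−β) − δ) − 1)/ϱ)`. -/
noncomputable def epsGlob (N : ℕ) (α β δ ϱ : ℝ) (L d : Fin N → ℝ) : ℝ :=
  Real.exp (((1 / (N : ℝ)) * ∑ j, (α * (L j + d j) ^ (-β) - δ) - 1) / ϱ)

/-- Organization `i`'s utility: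
`U_i(d) = ψ_i·(ε_0 − ε(d)) + Σ_{j≠i} (ξ − φ_j)·γ_{i,j}·Δ_i(d) − c_i·d_i − K_i`,
where `Δ_i(d) = ε(d) − ε(d with i-th coordinate 0)`. -/
noncomputable def utility (N : ℕ) (α β δ ϱ : ℝ) (L c ψ φ K : Fin N → ℝ)
    (γ : Fin N → Fin N → ℝ) (ξ ε0 : ℝ) (i : Fin N) (d : Fin N → ℝ) : ℝ :=
  ψ i * (ε0 - epsGlob N α β δ ϱ L d)
    + ∑ j ∈ Finset.univ.erase i, (ξ - φ j) * γ i j *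
        (epsGlob N α β δ ϱ L d - epsGlob N α β δ ϱ L (Function.update d i 0))
    - c i * d i - K i

/-! The game is a weighted potential game: when only `d i` moves, organization `i`'s utility
changes by `B i` times the change of `Φ d = -ε d - ∑ j, (c j / B j) * d j`, where
`B i = ψ i + ∑ j ≠ i, (φ j - ξ) * γ i j > 0`, because the baseline `ε_{-i}` does not depend on
`d i`. A maximiser of the continuous `Φ` on the compact box is therefore an equilibrium.
Conversely, at an equilibrium no partial derivative of `Φ` points into the box, and `Φ` lies
strictly below its tangent planes (`x ↦ x ^ (-β)` is strictly convex, `exp` convex and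
increasing), so every equilibrium is a strict global maximiser of `Φ`: there is only one. -/

open Function

theorem sum_mul_update_sub {ι : Type*} [Fintype ι] [DecidableEq ι] (w d : ι → ℝ) (i : ι) (y : ℝ) :
    ∑ j, w j * update d i y j - ∑ j, w j * d j = w i * (y - d i) := by
  rw [← sum_sub_distrib, sum_eq_single i (fun j _ hj ↦ by simp [update_of_ne hj])
    (by simp), update_self, mul_sub]

theorem rpow_neg_tangent_lt {β x z : ℝ} (hβ : 0 < β) (hx : 0 < x) (hz : 0 < z) (hne : z ≠ x) :
    x ^ (-β) - β * x ^ (-β - 1) * (z - x) < z ^ (-β) := by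
  have ht : 0 < z / x := div_pos hz hx
  have hlog : log (z / x) < z / x - 1 :=
    log_lt_sub_one_of_pos ht fun h ↦ hne ((div_eq_one_iff_eq hx.ne').mp h)
  have hexp : 1 - β * (z / x - 1) < (z / x) ^ (-β) := by
    rw [rpow_def_of_pos ht]
    nlinarith [add_one_le_exp (log (z / x) * -β)]
  have hscale : x ^ (-β) * (z / x) ^ (-β) = z ^ (-β) := by
    rw [div_rpow hz.le hx.le, mul_div_cancel₀ _ (rpow_pos_of_pos hx _).ne']
  have htangent : x ^ (-β) * (1 - β * (z / x - 1)) = x ^ (-β) - β * x ^ (-β - 1) * (z - x) := by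
    rw [rpow_sub_one hx.ne']
    field_simp
  rw [← hscale, ← htangent]
  exact mul_lt_mul_of_pos_left hexp (rpow_pos_of_pos hx _)

section PotentialGame

variable {ι : Type*} [DecidableEq ι]

def IsNashEquilibrium (U : ι → (ι → ℝ) → ℝ) (S : Set ℝ) (d : ι → ℝ) : Prop :=
  (∀ i, d i ∈ S) ∧ ∀ i, ∀ y ∈ S, U i (update d i y) ≤ U i d

def IsWeightedPotential (U : ι → (ι → ℝ) → ℝ) (B : ι → ℝ) (Φ : (ι → ℝ) → ℝ) : Prop :=
  (∀ i, 0 < B i) ∧ ∀ d i y, U i (update d i y) - U i d = B i * (Φ (update d i y) - Φ d)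

theorem IsMaxOn.hasDerivAt_mul_sub_nonpos {q : ℝ → ℝ} {S : Set ℝ} {x y q' : ℝ}
    (hmax : IsMaxOn q S x) (hS : Convex ℝ S) (hx : x ∈ S) (hy : y ∈ S) (hq : HasDerivAt q q' x) :
    q' * (y - x) ≤ 0 := by
  have h := hmax.localize.hasFDerivWithinAt_nonpos hq.hasFDerivAt.hasFDerivWithinAt
    (sub_mem_posTangentConeAt_of_segment_subset (hS.segment_subset hx hy))
  simpa [mul_comm] using h

variable {U : ι → (ι → ℝ) → ℝ} {B : ι → ℝ} {Φ : (ι → ℝ) → ℝ} {S : Set ℝ}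

theorem IsWeightedPotential.isNashEquilibrium_iff (hΦ : IsWeightedPotential U B Φ) {d : ι → ℝ} :
    IsNashEquilibrium U S d ↔ (∀ i, d i ∈ S) ∧ ∀ i, IsMaxOn (fun s ↦ Φ (update d i s)) S (d i) := by
  refine and_congr_right fun _ ↦ forall_congr' fun i ↦ forall₂_congr fun y _ ↦ ?_
  change _ ↔ Φ (update d i y) ≤ Φ (update d i (d i))
  rw [update_eq_self, ← sub_nonpos, hΦ.2, ← mul_zero (B i),
    mul_le_mul_iff_of_pos_left (hΦ.1 i), sub_nonpos]

theorem IsWeightedPotential.exists_isNashEquilibrium (hΦ : IsWeightedPotential U B Φ)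
    (hS : IsCompact S) (hSne : S.Nonempty) (hcont : ContinuousOn Φ (Set.univ.pi fun _ ↦ S)) :
    ∃ d, IsNashEquilibrium U S d := by
  obtain ⟨d, hd, hmax⟩ := (isCompact_univ_pi fun _ ↦ hS).exists_isMaxOn
    (Set.univ_pi_nonempty_iff.mpr fun _ ↦ hSne) hcont
  refine ⟨d, hΦ.isNashEquilibrium_iff.mpr ⟨fun i ↦ hd i (Set.mem_univ i), fun i s hs ↦ ?_⟩⟩
  simpa using hmax ((Set.update_mem_pi_iff_of_mem hd).mpr fun _ ↦ hs)

variable [Fintype ι] {Φ' : (ι → ℝ) → ι → ℝ}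

theorem IsNashEquilibrium.potential_lt (hΦ : IsWeightedPotential U B Φ) (hS : Convex ℝ S)
    (hderiv : ∀ d ∈ Set.univ.pi (fun _ ↦ S), ∀ i,
      HasDerivAt (fun s ↦ Φ (update d i s)) (Φ' d i) (d i))
    (htangent : ∀ d ∈ Set.univ.pi (fun _ ↦ S), ∀ e ∈ Set.univ.pi (fun _ ↦ S), e ≠ d →
      Φ e < Φ d + ∑ i, Φ' d i * (e i - d i))
    {d e : ι → ℝ} (hd : IsNashEquilibrium U S d) (he : e ∈ Set.univ.pi (fun _ ↦ S)) (hne : e ≠ d) :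
    Φ e < Φ d := by
  obtain ⟨hdS, hmax⟩ := hΦ.isNashEquilibrium_iff.mp hd
  have hd' : d ∈ Set.univ.pi (fun _ ↦ S) := fun i _ ↦ hdS i
  have hfirst_order : ∑ i, Φ' d i * (e i - d i) ≤ 0 := sum_nonpos fun i _ ↦
    (hmax i).hasDerivAt_mul_sub_nonpos hS (hdS i) (he i (Set.mem_univ i)) (hderiv d hd' i)
  linarith [htangent d hd' e he hne]

theorem IsNashEquilibrium.eq_of_potential (hΦ : IsWeightedPotential U B Φ) (hS : Convex ℝ S)
    (hderiv : ∀ d ∈ Set.univ.pi (fun _ ↦ S), ∀ i,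
      HasDerivAt (fun s ↦ Φ (update d i s)) (Φ' d i) (d i))
    (htangent : ∀ d ∈ Set.univ.pi (fun _ ↦ S), ∀ e ∈ Set.univ.pi (fun _ ↦ S), e ≠ d →
      Φ e < Φ d + ∑ i, Φ' d i * (e i - d i))
    {d e : ι → ℝ} (hd : IsNashEquilibrium U S d) (he : IsNashEquilibrium U S e) : d = e := by
  by_contra hne
  exact lt_asymm (hd.potential_lt hΦ hS hderiv htangent (fun i _ ↦ he.1 i) (Ne.symm hne))
    (he.potential_lt hΦ hS hderiv htangent (fun i _ ↦ hd.1 i) hne)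

end PotentialGame

section Model

variable {N : ℕ} {α β δ ϱ : ℝ} {L c ψ φ K : Fin N → ℝ} {γ : Fin N → Fin N → ℝ} {ξ ε0 : ℝ}

def errorWeight (ψ φ : Fin N → ℝ) (γ : Fin N → Fin N → ℝ) (ξ : ℝ) (i : Fin N) : ℝ :=
  ψ i - ∑ j ∈ univ.erase i, (ξ - φ j) * γ i j

noncomputable def potential (N : ℕ) (α β δ ϱ : ℝ) (L w d : Fin N → ℝ) : ℝ :=
  -epsGlob N α β δ ϱ L d - ∑ j, w j * d j

theorem errorWeight_pos (hψ : ∀ i, 0 < ψ i) (hγ : ∀ i j, 0 ≤ γ i j) (hξ : ∀ j, ξ ≤ φ j)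
    (i : Fin N) : 0 < errorWeight ψ φ γ ξ i := by
  have : ∑ j ∈ univ.erase i, (ξ - φ j) * γ i j ≤ 0 :=
    sum_nonpos fun j _ ↦ mul_nonpos_of_nonpos_of_nonneg (sub_nonpos.mpr (hξ j)) (hγ i j)
  rw [errorWeight]
  linarith [hψ i]

theorem utility_update_sub {i : Fin N} (hB : errorWeight ψ φ γ ξ i ≠ 0) (d : Fin N → ℝ) (y : ℝ) :
    utility N α β δ ϱ L c ψ φ K γ ξ ε0 i (update d i y) - utility N α β δ ϱ L c ψ φ K γ ξ ε0 i d
      = errorWeight ψ φ γ ξ i *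
        (potential N α β δ ϱ L (fun j ↦ c j / errorWeight ψ φ γ ξ j) (update d i y)
          - potential N α β δ ϱ L (fun j ↦ c j / errorWeight ψ φ γ ξ j) d) := by
  have hsum := sum_mul_update_sub (fun j ↦ c j / errorWeight ψ φ γ ξ j) d i y
  have hc : errorWeight ψ φ γ ξ i * (c i / errorWeight ψ φ γ ξ i) = c i := mul_div_cancel₀ _ hB
  have hB_def : errorWeight ψ φ γ ξ i = ψ i - ∑ j ∈ univ.erase i, (ξ - φ j) * γ i j := rfl
  simp only [utility, potential, update_idem, update_self, ← sum_mul]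
  linear_combination (epsGlob N α β δ ϱ L (update d i y) - epsGlob N α β δ ϱ L d) * hB_def
    + errorWeight ψ φ γ ξ i * hsum + (y - d i) * hc

noncomputable def potentialPartial (N : ℕ) (α β δ ϱ : ℝ) (L w d : Fin N → ℝ) (i : Fin N) : ℝ :=
  α * β / (N * ϱ) * epsGlob N α β δ ϱ L d * (L i + d i) ^ (-β - 1) - w i

theorem hasDerivAt_potential_update {w d : Fin N → ℝ} (hd : ∀ j, 0 < L j + d j) (i : Fin N) :
    HasDerivAt (fun s ↦ potential N α β δ ϱ L w (update d i s))
      (potentialPartial N α β δ ϱ L w d i) (d i) := by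
  have hcoord : ∀ j, HasDerivAt (fun s ↦ update d i s j) (if j = i then 1 else 0) (d i) :=
    fun j ↦ by
      rcases eq_or_ne j i with rfl | hj
      · simpa using hasDerivAt_id' (d j)
      · simpa [update_of_ne hj, hj] using hasDerivAt_const (d i) (d j)
  have hpow : ∀ j, HasDerivAt (fun s ↦ (L j + update d i s j) ^ (-β))
      ((if j = i then 1 else 0) * (-β) * (L j + d j) ^ (-β - 1)) (d i) := fun j ↦ by
    simpa using ((hcoord j).const_add (L j)).rpow_const (p := -β)
      (Or.inl (by simpa using (hd j).ne'))
  have hexponent := (((HasDerivAt.fun_sum (u := univ) fun j _ ↦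
    ((hpow j).const_mul α).sub_const δ).const_mul (1 / (N : ℝ))).sub_const 1).div_const ϱ
  have h := hexponent.exp.neg.sub
    (HasDerivAt.fun_sum (u := univ) fun j _ ↦ (hcoord j).const_mul (w j))
  refine h.congr_deriv ?_
  simp only [potentialPartial, epsGlob, update_eq_self, ite_mul, mul_ite, one_mul, zero_mul,
    mul_zero, sum_ite_eq', mem_univ, if_true]
  ring

theorem potential_lt_add_sum (hN : 0 < N) (hα : 0 < α) (hβ : 0 < β) (hϱ : 0 < ϱ)
    {w d y : Fin N → ℝ} (hd : ∀ j, 0 < L j + d j) (hy : ∀ j, 0 < L j + y j) (hne : y ≠ d) :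
    potential N α β δ ϱ L w y
      < potential N α β δ ϱ L w d + ∑ j, potentialPartial N α β δ ϱ L w d j * (y j - d j) := by
  set E := epsGlob N α β δ ϱ L d
  set κ := α / (N * ϱ)
  set T := ∑ j, (L j + d j) ^ (-β - 1) * (y j - d j)
  have hκ : 0 < κ := div_pos hα (mul_pos (Nat.cast_pos.mpr hN) hϱ)
  have hsum_tangent : ∑ j, (L j + d j) ^ (-β) - β * T < ∑ j, (L j + y j) ^ (-β) := by
    have hstrict : ∀ j, y j ≠ d j → (L j + d j) ^ (-β) - β * (L j + d j) ^ (-β - 1) * (y j - d j)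
        < (L j + y j) ^ (-β) := fun j h ↦ by
      simpa only [add_sub_add_left_eq_sub] using
        rpow_neg_tangent_lt hβ (hd j) (hy j) (by simpa using h)
    obtain ⟨j₀, hj₀⟩ := Function.ne_iff.mp hne
    have hlt := sum_lt_sum
      (fun j _ ↦ (eq_or_ne (y j) (d j)).elim (fun h ↦ by simp [h]) fun h ↦ (hstrict j h).le)
      ⟨j₀, mem_univ j₀, hstrict j₀ hj₀⟩
    simpa only [sum_sub_distrib, mul_assoc, ← mul_sum] using hlt
  have hexponent : epsGlob N α β δ ϱ L y
      = E * exp (κ * (∑ j, (L j + y j) ^ (-β) - ∑ j, (L j + d j) ^ (-β))) := by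
    have hN' : (N : ℝ) ≠ 0 := Nat.cast_ne_zero.mpr hN.ne'
    simp only [E, κ, epsGlob, ← exp_add, sum_sub_distrib, ← mul_sum]
    congr 1
    field_simp
    ring
  have hlin : ∑ j, potentialPartial N α β δ ϱ L w d j * (y j - d j)
      = κ * β * E * T - (∑ j, w j * y j - ∑ j, w j * d j) := by
    simp only [potentialPartial, T, mul_sum, ← sum_sub_distrib]
    exact sum_congr rfl fun j _ ↦ by ring
  have hE : 0 < E := exp_pos _
  have hexp_tangent := mul_le_mul_of_nonneg_left
    (add_one_le_exp (κ * (∑ j, (L j + y j) ^ (-β) - ∑ j, (L j + d j) ^ (-β)))) hE.le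
  have hscaled := mul_lt_mul_of_pos_left hsum_tangent (mul_pos hE hκ)
  rw [potential, potential, hlin, hexponent]
  linarith

theorem isWeightedPotential_utility (hψ : ∀ i, 0 < ψ i) (hγ : ∀ i j, 0 ≤ γ i j)
    (hξ : ∀ j, ξ ≤ φ j) :
    IsWeightedPotential (utility N α β δ ϱ L c ψ φ K γ ξ ε0) (errorWeight ψ φ γ ξ)
      (potential N α β δ ϱ L fun j ↦ c j / errorWeight ψ φ γ ξ j) :=
  ⟨errorWeight_pos hψ hγ hξ, fun _ i _ ↦ utility_update_sub (errorWeight_pos hψ hγ hξ i).ne' _ _⟩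

theorem continuousOn_potential (w : Fin N → ℝ) :
    ContinuousOn (potential N α β δ ϱ L w) {d | ∀ j, 0 < L j + d j} := by
  have hpow : ∀ j, ContinuousOn (fun d : Fin N → ℝ ↦ (L j + d j) ^ (-β)) {d | ∀ j, 0 < L j + d j} :=
    fun j ↦ (continuous_const.add (continuous_apply j)).continuousOn.rpow_const
      fun d hd ↦ Or.inl (hd j).ne'
  have hsum : ContinuousOn (fun d : Fin N → ℝ ↦ ∑ j, (α * (L j + d j) ^ (-β) - δ))
      {d | ∀ j, 0 < L j + d j} :=
    continuousOn_finsetSum _ fun j _ ↦ (continuousOn_const.mul (hpow j)).sub continuousOn_const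
  unfold potential epsGlob
  fun_prop

end Model

theorem existsUnique_nash_equilibrium_general (N : ℕ) (hN : 1 ≤ N) (α β δ ϱ : ℝ) (hα : 0 < α) (hβ : 0 < β)
    (hϱ : 0 < ϱ) (L c ψ φ K : Fin N → ℝ)
    (hL : ∀ i, 0 < L i) (hψ : ∀ i, 0 < ψ i)
    (γ : Fin N → Fin N → ℝ) (hγ : ∀ i j, γ i j ∈ Set.Icc (0 : ℝ) 1)
    (ξ : ℝ) (hξ : ∀ j, ξ ≤ φ j) (ε0 : ℝ) 
    (m M : ℝ) (hm : 0 ≤ m) (hmM : m < M) :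
    ∃! dstar : Fin N → ℝ, (∀ i, dstar i ∈ Set.Icc m M) ∧
      ∀ i : Fin N, ∀ y ∈ Set.Icc m M,
        utility N α β δ ϱ L c ψ φ K γ ξ ε0 i (Function.update dstar i y)
          ≤ utility N α β δ ϱ L c ψ φ K γ ξ ε0 i dstar := by
  have hpot : IsWeightedPotential (utility N α β δ ϱ L c ψ φ K γ ξ ε0) _ _ :=
    isWeightedPotential_utility hψ (fun i j ↦ (hγ i j).1) hξ
  have hbox : Set.univ.pi (fun _ ↦ Set.Icc m M) ⊆ {d | ∀ j, 0 < L j + d j} :=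
    fun d hd j ↦ by linarith [(hd j (Set.mem_univ j)).1, hL j]
  refine existsUnique_of_exists_of_unique
    (hpot.exists_isNashEquilibrium isCompact_Icc (Set.nonempty_Icc.mpr hmM.le)
      ((continuousOn_potential _).mono hbox))
    fun _ _ ↦ IsNashEquilibrium.eq_of_potential hpot (convex_Icc m M)
      (fun d hd i ↦ hasDerivAt_potential_update (hbox hd) i)
      (fun d hd e he hne ↦ potential_lt_add_sum hN hα hβ hϱ (hbox hd) (hbox he) hne)

/-- The game has exactly one pure-strategy Nash equilibrium on the
box `∏_i [m, M]`. -/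
theorem existsUnique_nash_equilibrium (N : ℕ) (hN : 1 ≤ N) (α β δ ϱ : ℝ) (hα : 0 < α) (hβ : 0 < β)
    (hϱ : 0 < ϱ) (hδ : 0 ≤ δ) (L c ψ φ K : Fin N → ℝ)
    (hL : ∀ i, 0 < L i) (hc : ∀ i, 0 < c i) (hψ : ∀ i, 0 < ψ i) (hφ : ∀ j, 0 < φ j)
    (hK : ∀ i, 0 ≤ K i)
    (γ : Fin N → Fin N → ℝ) (hγ : ∀ i j, γ i j ∈ Set.Icc (0 : ℝ) 1)
    (ξ : ℝ) (hξ0 : 0 ≤ ξ) (hξ : ∀ j, ξ ≤ φ j) (ε0 : ℝ) 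
    (m M : ℝ) (hm : 0 ≤ m) (hmM : m < M) :
    ∃! dstar : Fin N → ℝ, (∀ i, dstar i ∈ Set.Icc m M) ∧
      ∀ i : Fin N, ∀ y ∈ Set.Icc m M,
        utility N α β δ ϱ L c ψ φ K γ ξ ε0 i (Function.update dstar i y)
          ≤ utility N α β δ ϱ L c ψ φ K γ ξ ε0 i dstar :=
  existsUnique_nash_equilibrium_general N hN α β δ ϱ hα hβ hϱ L c ψ φ K hL hψ γ hγ ξ hξ ε0 m M hm
    hmM
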